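/- (Schwarz–Pick lemma for harmonic K-quasiregular maps into the strip) If f : U → S is harmonic, sense-preserving K-quasiregular (K ≥ 1), then d_S(f(z₁), f(z₂)) ≤ K·d_U(z₁, z₂) for all z₁, z₂ ∈ U. -/

import Mathlib

open Complex Set

/-- The strip `S = {z : -1 < Re z < 1}`. -/
def stripS : Set ℂ := {z : ℂ | -1 < z.re ∧ z.re < 1}

/-- The unit disc. -/
def discU : Set ℂ := {z : ℂ | ‖z‖ < 1}

/-- Hyperbolic density of the strip. -/
noncomputable def rhoS (z : ℂ) : ℝ := (Real.pi / 2) / Real.cos (Real.pi / 2 * z.re)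

/-- Hyperbolic density of the unit disc. -/
noncomputable def rhoU (z : ℂ) : ℝ := 2 / (1 - ‖z‖ ^ 2)

/-- Hyperbolic length of a curve in the strip. -/
noncomputable def hypLenS (γ : ℝ → ℂ) : ℝ := ∫ t in (0:ℝ)..1, rhoS (γ t) * ‖deriv γ t‖

/-- Hyperbolic length of a curve in the disc. -/
noncomputable def hypLenU (γ : ℝ → ℂ) : ℝ := ∫ t in (0:ℝ)..1, rhoU (γ t) * ‖deriv γ t‖

/-- Hyperbolic distance on the strip: infimum of hyperbolic lengths of C¹ curves. -/
noncomputable def dS (z₁ z₂ : ℂ) : ℝ :=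
  sInf { L : ℝ | ∃ γ : ℝ → ℂ, ContDiffOn ℝ 1 γ (Icc 0 1) ∧ γ 0 = z₁ ∧ γ 1 = z₂ ∧
    (∀ t ∈ Icc (0:ℝ) 1, γ t ∈ stripS) ∧ L = hypLenS γ }

/-- Hyperbolic distance on the unit disc. -/
noncomputable def dU (z₁ z₂ : ℂ) : ℝ :=
  sInf { L : ℝ | ∃ γ : ℝ → ℂ, ContDiffOn ℝ 1 γ (Icc 0 1) ∧ γ 0 = z₁ ∧ γ 1 = z₂ ∧
    (∀ t ∈ Icc (0:ℝ) 1, γ t ∈ discU) ∧ L = hypLenU γ }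

/-- The conformal map of the disc onto the strip, inverse of `z ↦ tan (π z / 4)`. -/
noncomputable def phiUS (z : ℂ) : ℂ :=
  (-(2 * Complex.I) / (Real.pi : ℂ)) * Complex.log ((1 + Complex.I * z) / (1 - Complex.I * z))

/-- Inverse hyperbolic tangent. -/
noncomputable def artanh (r : ℝ) : ℝ := Real.log ((1 + r) / (1 - r)) / 2

/-- A real-valued function is harmonic on a set. -/
def HarmonicOnR (u : ℂ → ℝ) (s : Set ℂ) : Prop :=
  ContDiffOn ℝ 2 u s ∧ ∀ z ∈ s,
    fderiv ℝ (fun w => fderiv ℝ u w 1) z 1 + fderiv ℝ (fun w => fderiv ℝ u w Complex.I) z Complex.I = 0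

/-- A complex-valued function is harmonic on a set. -/
def HarmonicOnC (f : ℂ → ℂ) (s : Set ℂ) : Prop :=
  ContDiffOn ℝ 2 f s ∧ ∀ z ∈ s,
    fderiv ℝ (fun w => fderiv ℝ f w 1) z 1 + fderiv ℝ (fun w => fderiv ℝ f w Complex.I) z Complex.I = 0

/-- Wirtinger derivative ∂f/∂z. -/
noncomputable def wderiv (f : ℂ → ℂ) (z : ℂ) : ℂ :=
  (fderiv ℝ f z 1 - Complex.I * fderiv ℝ f z Complex.I) / 2

/-- Wirtinger derivative ∂f/∂z̄. -/
noncomputable def wderivBar (f : ℂ → ℂ) (z : ℂ) : ℂ :=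
  (fderiv ℝ f z 1 + Complex.I * fderiv ℝ f z Complex.I) / 2

/-- Sense-preserving K-quasiregular C¹ map on a set. -/
def QRegOn (K : ℝ) (f : ℂ → ℂ) (s : Set ℂ) : Prop :=
  ContDiffOn ℝ 1 f s ∧ ∀ z ∈ s,
    ‖wderivBar f z‖ < ‖wderiv f z‖ ∧
    ‖wderiv f z‖ + ‖wderivBar f z‖
      ≤ K * (‖wderiv f z‖ - ‖wderivBar f z‖)

/-!
Write `u = Re f`. Being harmonic on the disc, `u` is the real part of a holomorphic `F`, whose
derivative is `f_z + conj f_z̄`; hence `|F'| ≥ |f_z| - |f_z̄|`. Since `F` maps the disc into the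
strip, the Schwarz–Pick lemma, transported to the strip by the conformal map `w ↦ tan (π w / 4)`,
gives `ρ_S(F) |F'| ≤ ρ_U`, and `ρ_S(F) = ρ_S(f)` because `ρ_S` only sees the real part. With
quasiregularity this yields `ρ_S(f z) |df_z v| ≤ (|f_z| + |f_z̄|) ρ_S(f z) |v| ≤ K ρ_U(z) |v|`,
so `f` stretches the hyperbolic length of every curve by at most `K`.
-/

open Metric Filter InnerProductSpace
open scoped Topology ComplexConjugate Real

lemma discU_eq_ball : discU = ball (0 : ℂ) 1 := by
  ext z; simp [discU]

lemma fderiv_apply_eq_wderiv (f : ℂ → ℂ) (z v : ℂ) :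
    fderiv ℝ f z v = wderiv f z * v + wderivBar f z * conj v := by
  have hv : v = v.re • (1 : ℂ) + v.im • Complex.I := by simp
  rw [hv, map_add, map_smul, map_smul]
  simp only [wderiv, wderivBar, Complex.real_smul, map_add, map_mul, Complex.conj_ofReal,
    Complex.conj_I, mul_one]
  ring_nf
  rw [Complex.I_sq]
  ring

lemma deriv_eq_wderiv_add_conj_wderivBar {F f : ℂ → ℂ} {z : ℂ} (hF : DifferentiableAt ℂ F z)
    (hf : DifferentiableAt ℝ f z) (hre : (fun w ↦ (F w).re) =ᶠ[𝓝 z] fun w ↦ (f w).re) :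
    deriv F z = wderiv f z + conj (wderivBar f z) := by
  have hFre : HasFDerivAt (fun w ↦ (F w).re)
      (Complex.reCLM.comp ((fderiv ℂ F z).restrictScalars ℝ)) z :=
    Complex.reCLM.hasFDerivAt.comp z (hF.hasFDerivAt.restrictScalars ℝ)
  have hfre : HasFDerivAt (fun w ↦ (F w).re) (Complex.reCLM.comp (fderiv ℝ f z)) z :=
    (Complex.reCLM.hasFDerivAt.comp z hf.hasFDerivAt).congr_of_eventuallyEq hre
  have key (v : ℂ) : (deriv F z * v).re = (fderiv ℝ f z v).re := by
    simpa [fderiv_eq_smul_deriv, mul_comm] using congrArg (· v) (hFre.unique hfre)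
  -- `d(Re F) = d(Re f)` at `z`; its values at `1` and `I` recover `F'`
  apply Complex.ext
  · simpa [fderiv_apply_eq_wderiv] using key 1
  · have := key Complex.I
    simp only [fderiv_apply_eq_wderiv, Complex.mul_re, Complex.I_re, Complex.I_im, mul_zero,
      mul_one, zero_sub, Complex.conj_I, mul_neg, Complex.add_re, Complex.neg_re, neg_neg,
      Complex.add_im, Complex.conj_im] at this ⊢
    linarith

lemma norm_fderiv_apply_le (f : ℂ → ℂ) (z v : ℂ) :
    ‖fderiv ℝ f z v‖ ≤ (‖wderiv f z‖ + ‖wderivBar f z‖) * ‖v‖ := by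
  rw [fderiv_apply_eq_wderiv, add_mul]
  refine (norm_add_le _ _).trans_eq ?_
  rw [norm_mul, norm_mul, Complex.norm_conj]

lemma QRegOn.one_le {K : ℝ} {f : ℂ → ℂ} {s : Set ℂ} {z : ℂ} (h : QRegOn K f s) (hz : z ∈ s) :
    1 ≤ K := by
  obtain ⟨hlt, hle⟩ := h.2 z hz
  have hpos : 0 < ‖wderiv f z‖ - ‖wderivBar f z‖ := sub_pos.2 hlt
  refine (le_mul_iff_one_le_left hpos).1 (le_trans ?_ hle)
  linarith [norm_nonneg (wderivBar f z)]

lemma HarmonicOnC.harmonicOnNhd {f : ℂ → ℂ} {s : Set ℂ} (h : HarmonicOnC f s) (hs : IsOpen s) :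
    HarmonicOnNhd f s := by
  intro x hx
  refine ⟨h.1.contDiffAt (hs.mem_nhds hx), ?_⟩
  filter_upwards [hs.mem_nhds hx] with y hy
  have hd : DifferentiableAt ℝ (fderiv ℝ f) y :=
    ((h.1.contDiffAt (hs.mem_nhds hy)).fderiv_right (m := 1) (by norm_num)).differentiableAt
      (by norm_num)
  have := h.2 y hy
  rw [fderiv_clm_apply hd (differentiableAt_const _),
    fderiv_clm_apply hd (differentiableAt_const _)] at this
  simpa [laplacian_eq_iteratedFDeriv_complexPlane, iteratedFDeriv_two_apply] using this

theorem HarmonicOnC.exists_re_eq_deriv_eq {f : ℂ → ℂ} {c : ℂ} {r : ℝ}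
    (h : HarmonicOnC f (ball c r)) :
    ∃ F : ℂ → ℂ, DifferentiableOn ℂ F (ball c r) ∧ ∀ z ∈ ball c r,
      (F z).re = (f z).re ∧ deriv F z = wderiv f z + conj (wderivBar f z) := by
  obtain ⟨F, hFa, hFre⟩ :=
    ((h.harmonicOnNhd isOpen_ball).comp_CLM Complex.reCLM).exists_analyticOnNhd_ball_re_eq
  refine ⟨F, hFa.differentiableOn, fun z hz ↦ ⟨hFre hz, ?_⟩⟩
  refine deriv_eq_wderiv_add_conj_wderivBar (hFa z hz).differentiableAt
    ((h.1.differentiableOn (by norm_num)).differentiableAt (isOpen_ball.mem_nhds hz)) ?_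
  filter_upwards [isOpen_ball.mem_nhds hz] with w hw using hFre hw

noncomputable def mobius (a z : ℂ) : ℂ := (z - a) / (1 - conj a * z)

lemma one_sub_conj_mul_ne_zero {a z : ℂ} (ha : ‖a‖ < 1) (hz : ‖z‖ < 1) : 1 - conj a * z ≠ 0 := by
  refine sub_ne_zero.2 fun h ↦ ?_
  have : ‖conj a * z‖ < 1 := by
    rw [norm_mul, Complex.norm_conj]
    nlinarith [norm_nonneg a, norm_nonneg z]
  simp [← h] at this

lemma normSq_one_sub_conj_mul_sub_normSq_sub (a z : ℂ) :
    normSq (1 - conj a * z) - normSq (z - a) = (1 - normSq a) * (1 - normSq z) := by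
  apply Complex.ofReal_injective
  push_cast
  simp only [Complex.normSq_eq_conj_mul_self, map_sub, map_mul, map_one, Complex.conj_conj]
  ring

lemma mapsTo_mobius {a : ℂ} (ha : a ∈ ball (0 : ℂ) 1) :
    MapsTo (mobius a) (ball 0 1) (ball 0 1) := by
  intro z hz
  rw [mem_ball_zero_iff] at ha hz ⊢
  have hden := one_sub_conj_mul_ne_zero ha hz
  have hsq := normSq_one_sub_conj_mul_sub_normSq_sub a z
  rw [mobius, norm_div, div_lt_one (norm_pos_iff.2 hden), ← sq_lt_sq₀ (norm_nonneg _)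
    (norm_nonneg _), ← Complex.normSq_eq_norm_sq, ← Complex.normSq_eq_norm_sq]
  have ha' : normSq a < 1 := by rw [Complex.normSq_eq_norm_sq]; nlinarith [norm_nonneg a]
  have hz' : normSq z < 1 := by rw [Complex.normSq_eq_norm_sq]; nlinarith [norm_nonneg z]
  nlinarith [mul_pos (sub_pos.2 ha') (sub_pos.2 hz')]

lemma hasDerivAt_mobius {a z : ℂ} (h : 1 - conj a * z ≠ 0) :
    HasDerivAt (mobius a) ((1 - normSq a) / (1 - conj a * z) ^ 2) z := by
  refine (((hasDerivAt_id' z).sub_const a).div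
    (((hasDerivAt_id' z).const_mul (conj a)).const_sub 1) h).congr_deriv ?_
  rw [Complex.normSq_eq_conj_mul_self]
  ring

lemma differentiableOn_mobius {a : ℂ} (ha : a ∈ ball (0 : ℂ) 1) :
    DifferentiableOn ℂ (mobius a) (ball 0 1) := fun _ hz ↦
  (hasDerivAt_mobius (one_sub_conj_mul_ne_zero (mem_ball_zero_iff.1 ha)
    (mem_ball_zero_iff.1 hz))).differentiableAt.differentiableWithinAt

theorem norm_deriv_mul_one_sub_sq_le_of_mapsTo_ball {h : ℂ → ℂ}
    (hd : DifferentiableOn ℂ h (ball 0 1)) (hm : MapsTo h (ball 0 1) (ball 0 1)) {z : ℂ} (hz : z ∈ ball (0 : ℂ) 1) :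
    ‖deriv h z‖ * (1 - ‖z‖ ^ 2) ≤ 1 - ‖h z‖ ^ 2 := by
  set w := h z
  have hw : w ∈ ball (0 : ℂ) 1 := hm hz
  have hz' : -z ∈ ball (0 : ℂ) 1 := by simpa using hz
  have hz1 : 0 < 1 - ‖z‖ ^ 2 := by have := mem_ball_zero_iff.1 hz; nlinarith [norm_nonneg z]
  have hw1 : 0 < 1 - ‖w‖ ^ 2 := by have := mem_ball_zero_iff.1 hw; nlinarith [norm_nonneg w]
  -- conjugating by disc automorphisms moving `z` and `h z` to `0` reduces this to Schwarz's lemma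
  set G := mobius w ∘ h ∘ mobius (-z)
  have hmz : mobius (-z) 0 = z := by simp [mobius]
  have hGd : DifferentiableOn ℂ G (ball 0 1) :=
    (differentiableOn_mobius hw).comp (hd.comp (differentiableOn_mobius hz') (mapsTo_mobius hz'))
      (hm.comp (mapsTo_mobius hz'))
  have hGm : MapsTo G (ball 0 1) (closedBall (G 0) 1) := by
    have hG0 : G 0 = 0 := by simp [G, w, mobius]
    rw [hG0]
    exact ((mapsTo_mobius hw).comp (hm.comp (mapsTo_mobius hz'))).mono_right ball_subset_closedBall
  have hG' : HasDerivAt G (deriv h z * (1 - ‖z‖ ^ 2 : ℝ) / (1 - ‖w‖ ^ 2 : ℝ)) 0 := by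
    have h1 := hasDerivAt_mobius (a := -z) (z := 0) (by simp)
    have h2 : HasDerivAt h (deriv h z) (mobius (-z) 0) := by
      rw [hmz]; exact (hd.differentiableAt (isOpen_ball.mem_nhds hz)).hasDerivAt
    have h3 : HasDerivAt (mobius w) ((1 - normSq w) / (1 - conj w * w) ^ 2)
        (h (mobius (-z) 0)) := by
      rw [hmz]
      exact hasDerivAt_mobius (one_sub_conj_mul_ne_zero (mem_ball_zero_iff.1 hw)
        (mem_ball_zero_iff.1 hw))
    refine (h3.comp 0 (h2.comp 0 h1)).congr_deriv ?_
    have hw1' : ((1 - ‖w‖ ^ 2 : ℝ) : ℂ) ≠ 0 := Complex.ofReal_ne_zero.2 hw1.ne'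
    rw [← Complex.normSq_eq_conj_mul_self]
    simp only [Complex.normSq_eq_norm_sq, map_neg, mul_zero, sub_zero, one_pow, div_one,
      norm_neg] at hw1' ⊢
    push_cast at hw1' ⊢
    field_simp
  have hSch := Complex.norm_deriv_le_div_of_mapsTo_ball hGd hGm one_pos
  rw [hG'.deriv, norm_div, norm_mul, Complex.norm_real, Complex.norm_real,
    Real.norm_of_nonneg hz1.le, Real.norm_of_nonneg hw1.le, div_one, div_le_one hw1] at hSch
  exact hSch

noncomputable def tanStrip (w : ℂ) : ℂ := Complex.tan (π / 4 * w)

lemma norm_cos_sq_sub_norm_sin_sq (ζ : ℂ) :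
    ‖Complex.cos ζ‖ ^ 2 - ‖Complex.sin ζ‖ ^ 2 = Real.cos (2 * ζ.re) := by
  have h : Complex.cos ζ * conj (Complex.cos ζ) - Complex.sin ζ * conj (Complex.sin ζ)
      = Complex.cos (ζ + conj ζ) := by
    rw [← Complex.cos_conj, ← Complex.sin_conj, Complex.cos_add]
  rw [Complex.add_conj, Complex.mul_conj, Complex.mul_conj] at h
  have := congrArg Complex.re h
  simp only [Complex.sub_re, Complex.ofReal_re] at this
  rw [← Complex.normSq_eq_norm_sq, ← Complex.normSq_eq_norm_sq, this, ← Complex.ofReal_cos,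
    Complex.ofReal_re]

lemma cos_pi_div_two_mul_re_pos {w : ℂ} (hw : w ∈ stripS) : 0 < Real.cos (π / 2 * w.re) := by
  obtain ⟨h1, h2⟩ := hw
  exact Real.cos_pos_of_mem_Ioo ⟨by nlinarith [Real.pi_pos], by nlinarith [Real.pi_pos]⟩

lemma norm_cos_sq_sub_norm_sin_sq_pi_div_four_mul (w : ℂ) :
    ‖Complex.cos (π / 4 * w)‖ ^ 2 - ‖Complex.sin (π / 4 * w)‖ ^ 2 = Real.cos (π / 2 * w.re) := by
  rw [norm_cos_sq_sub_norm_sin_sq]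
  congr 1
  simp only [Complex.mul_re, Complex.div_ofNat_re, Complex.ofReal_re, Complex.div_ofNat_im,
    Complex.ofReal_im, zero_div, zero_mul, sub_zero]
  ring

lemma cos_ne_zero_of_mem_stripS {w : ℂ} (hw : w ∈ stripS) : Complex.cos (π / 4 * w) ≠ 0 := by
  intro h
  have := norm_cos_sq_sub_norm_sin_sq_pi_div_four_mul w
  rw [h, norm_zero] at this
  nlinarith [cos_pi_div_two_mul_re_pos hw, sq_nonneg ‖Complex.sin (π / 4 * w)‖]

lemma mapsTo_tanStrip : MapsTo tanStrip stripS (ball 0 1) := by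
  intro w hw
  have hc := norm_pos_iff.2 (cos_ne_zero_of_mem_stripS hw)
  have := norm_cos_sq_sub_norm_sin_sq_pi_div_four_mul w
  rw [mem_ball_zero_iff, tanStrip, Complex.tan_eq_sin_div_cos, norm_div, div_lt_one hc]
  nlinarith [cos_pi_div_two_mul_re_pos hw, norm_nonneg (Complex.sin (π / 4 * w))]

lemma hasDerivAt_tanStrip {w : ℂ} (hw : w ∈ stripS) :
    HasDerivAt tanStrip (π / 4 / Complex.cos (π / 4 * w) ^ 2) w := by
  refine ((Complex.hasDerivAt_tan (cos_ne_zero_of_mem_stripS hw)).comp w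
    ((hasDerivAt_id' w).const_mul _)).congr_deriv ?_
  ring

lemma rhoS_mul_one_sub_norm_tanStrip_sq {w : ℂ} (hw : w ∈ stripS) :
    rhoS w * (1 - ‖tanStrip w‖ ^ 2) = 2 * ‖deriv tanStrip w‖ := by
  have hc := norm_pos_iff.2 (cos_ne_zero_of_mem_stripS hw)
  have hpos := cos_pi_div_two_mul_re_pos hw
  have hdiff := norm_cos_sq_sub_norm_sin_sq_pi_div_four_mul w
  rw [(hasDerivAt_tanStrip hw).deriv, tanStrip, Complex.tan_eq_sin_div_cos, norm_div, norm_div,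
    norm_pow, rhoS, div_pow, one_sub_div (by positivity), hdiff]
  rw [show ‖(π / 4 : ℂ)‖ = π / 4 by
    rw [show (π / 4 : ℂ) = ((π / 4 : ℝ) : ℂ) by push_cast; ring, Complex.norm_real,
      Real.norm_of_nonneg (by positivity)]]
  rw [div_mul_div_comm, mul_comm (π / 2), mul_div_mul_left _ _ hpos.ne']
  ring

lemma rhoS_pos {w : ℂ} (hw : w ∈ stripS) : 0 < rhoS w :=
  div_pos (by positivity) (cos_pi_div_two_mul_re_pos hw)

theorem rhoS_mul_norm_deriv_le {F : ℂ → ℂ} (hF : DifferentiableOn ℂ F (ball 0 1))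
    (hmap : MapsTo F (ball 0 1) stripS) {z : ℂ} (hz : z ∈ ball (0 : ℂ) 1) :
    rhoS (F z) * ‖deriv F z‖ ≤ rhoU z := by
  have hFz := hmap hz
  have hψ : HasDerivAt tanStrip (deriv tanStrip (F z)) (F z) :=
    (hasDerivAt_tanStrip hFz).differentiableAt.hasDerivAt
  have hd : DifferentiableOn ℂ (tanStrip ∘ F) (ball 0 1) := fun x hx ↦
    ((hasDerivAt_tanStrip (hmap hx)).differentiableAt.comp x
      (hF.differentiableAt (isOpen_ball.mem_nhds hx))).differentiableWithinAt
  have hSP := norm_deriv_mul_one_sub_sq_le_of_mapsTo_ball hd (mapsTo_tanStrip.comp hmap) hz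
  rw [(hψ.comp z (hF.differentiableAt (isOpen_ball.mem_nhds hz)).hasDerivAt).deriv, norm_mul,
    Function.comp_apply] at hSP
  have hdens := rhoS_mul_one_sub_norm_tanStrip_sq hFz
  have hψ1 : 0 < 1 - ‖tanStrip (F z)‖ ^ 2 := by
    have := mem_ball_zero_iff.1 (mapsTo_tanStrip hFz); nlinarith [norm_nonneg (tanStrip (F z))]
  have hz1 : 0 < 1 - ‖z‖ ^ 2 := by have := mem_ball_zero_iff.1 hz; nlinarith [norm_nonneg z]
  rw [rhoU, le_div_iff₀ hz1]
  refine le_of_mul_le_mul_right ?_ hψ1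
  calc rhoS (F z) * ‖deriv F z‖ * (1 - ‖z‖ ^ 2) * (1 - ‖tanStrip (F z)‖ ^ 2)
      = 2 * (‖deriv tanStrip (F z)‖ * ‖deriv F z‖ * (1 - ‖z‖ ^ 2)) := by
        linear_combination ‖deriv F z‖ * (1 - ‖z‖ ^ 2) * hdens
    _ ≤ 2 * (1 - ‖tanStrip (F z)‖ ^ 2) := by gcongr

theorem rhoS_mul_norm_fderiv_le {K : ℝ} {f : ℂ → ℂ} (hharm : HarmonicOnC f discU)
    (hqr : QRegOn K f discU) (hmap : MapsTo f discU stripS) {z : ℂ} (hz : z ∈ discU) (v : ℂ) :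
    rhoS (f z) * ‖fderiv ℝ f z v‖ ≤ K * (rhoU z * ‖v‖) := by
  have hK : 0 ≤ K := zero_le_one.trans (hqr.one_le hz)
  rw [discU_eq_ball] at hharm hmap hz
  obtain ⟨F, hF, hFf⟩ := hharm.exists_re_eq_deriv_eq
  have hFS : MapsTo F (ball 0 1) stripS := fun x hx ↦ by
    change -1 < (F x).re ∧ (F x).re < 1
    rw [(hFf x hx).1]
    exact hmap hx
  have hρ : rhoS (f z) = rhoS (F z) := by simp only [rhoS, (hFf z hz).1]
  have hgrad : ‖wderiv f z‖ - ‖wderivBar f z‖ ≤ ‖deriv F z‖ := by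
    rw [(hFf z hz).2, ← Complex.norm_conj (wderivBar f z)]
    exact norm_sub_le_norm_add _ _
  calc rhoS (f z) * ‖fderiv ℝ f z v‖
      ≤ rhoS (f z) * ((‖wderiv f z‖ + ‖wderivBar f z‖) * ‖v‖) := by
        gcongr
        · exact (rhoS_pos (hmap hz)).le
        · exact norm_fderiv_apply_le f z v
    _ ≤ rhoS (f z) * (K * ‖deriv F z‖ * ‖v‖) := by
        gcongr
        · exact (rhoS_pos (hmap hz)).le
        · exact (hqr.2 z (discU_eq_ball ▸ hz)).2.trans (by gcongr)
    _ = K * (rhoS (F z) * ‖deriv F z‖) * ‖v‖ := by rw [hρ]; ring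
    _ ≤ K * rhoU z * ‖v‖ := by gcongr; exact rhoS_mul_norm_deriv_le hF hFS hz
    _ = K * (rhoU z * ‖v‖) := mul_assoc _ _ _

open MeasureTheory in
lemma integral_mul_norm_deriv_eq_derivWithin (ρ : ℂ → ℝ) (γ : ℝ → ℂ) :
    ∫ t in (0 : ℝ)..1, ρ (γ t) * ‖deriv γ t‖ =
      ∫ t in (0 : ℝ)..1, ρ (γ t) * ‖derivWithin γ (Icc 0 1) t‖ := by
  simp only [intervalIntegral.integral_of_le zero_le_one, integral_Ioc_eq_integral_Ioo]
  refine setIntegral_congr_fun measurableSet_Ioo fun t ht ↦ ?_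
  rw [derivWithin_of_mem_nhds (Icc_mem_nhds ht.1 ht.2)]

theorem integral_mul_norm_deriv_comp_le {U V : Set ℂ} {ρ₁ ρ₂ : ℂ → ℝ} (hρ₁ : ContinuousOn ρ₁ U)
    (hρ₂ : ContinuousOn ρ₂ V) {f : ℂ → ℂ} (hU : IsOpen U) (hf : ContDiffOn ℝ 1 f U)
    (hfUV : MapsTo f U V) {K : ℝ}
    (hbound : ∀ z ∈ U, ∀ v, ρ₂ (f z) * ‖fderiv ℝ f z v‖ ≤ K * (ρ₁ z * ‖v‖))
    {γ : ℝ → ℂ} (hγ : ContDiffOn ℝ 1 γ (Icc 0 1)) (hγU : MapsTo γ (Icc 0 1) U) :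
    ∫ t in (0 : ℝ)..1, ρ₂ ((f ∘ γ) t) * ‖deriv (f ∘ γ) t‖ ≤
      K * ∫ t in (0 : ℝ)..1, ρ₁ (γ t) * ‖deriv γ t‖ := by
  rw [integral_mul_norm_deriv_eq_derivWithin, integral_mul_norm_deriv_eq_derivWithin,
    ← intervalIntegral.integral_const_mul]
  have huniq : UniqueDiffOn ℝ (Icc (0 : ℝ) 1) := uniqueDiffOn_Icc zero_lt_one
  have hfγ : ContDiffOn ℝ 1 (f ∘ γ) (Icc 0 1) := hf.comp hγ hγU
  have hchain : ∀ t ∈ Icc (0 : ℝ) 1,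
      derivWithin (f ∘ γ) (Icc 0 1) t = fderiv ℝ f (γ t) (derivWithin γ (Icc 0 1) t) := by
    intro t ht
    have hfd : HasFDerivAt f (fderiv ℝ f (γ t)) (γ t) :=
      ((hf.differentiableOn one_ne_zero).differentiableAt (hU.mem_nhds (hγU ht))).hasFDerivAt
    exact (hfd.comp_hasDerivWithinAt t
      ((hγ.differentiableOn one_ne_zero) t ht).hasDerivWithinAt).derivWithin (huniq t ht)
  refine intervalIntegral.integral_mono_on zero_le_one ?_ ?_ fun t ht ↦ ?_
  · refine ContinuousOn.intervalIntegrable ?_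
    rw [uIcc_of_le zero_le_one]
    exact (hρ₂.comp hfγ.continuousOn (hfUV.comp hγU)).mul
      (hfγ.continuousOn_derivWithin huniq le_rfl).norm
  · refine ContinuousOn.intervalIntegrable ?_
    rw [uIcc_of_le zero_le_one]
    exact continuousOn_const.mul ((hρ₁.comp hγ.continuousOn hγU).mul
      (hγ.continuousOn_derivWithin huniq le_rfl).norm)
  · rw [hchain t ht]
    exact hbound _ (hγU ht) _

lemma continuousOn_rhoS : ContinuousOn rhoS stripS :=
  continuousOn_const.div (by fun_prop) fun _ hw ↦ (cos_pi_div_two_mul_re_pos hw).ne'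

lemma continuousOn_rhoU : ContinuousOn rhoU discU := by
  refine continuousOn_const.div (by fun_prop) fun z hz ↦ ?_
  have : ‖z‖ < 1 := hz
  nlinarith [norm_nonneg z]

lemma hypLenS_nonneg {γ : ℝ → ℂ} (hγ : MapsTo γ (Icc 0 1) stripS) : 0 ≤ hypLenS γ :=
  intervalIntegral.integral_nonneg zero_le_one fun _ ht ↦
    mul_nonneg (rhoS_pos (hγ ht)).le (norm_nonneg _)

theorem dS_le_mul_dU {K : ℝ} (hK : 0 ≤ K) {f : ℂ → ℂ} (hf : ContDiffOn ℝ 1 f discU)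
    (hmap : MapsTo f discU stripS)
    (hbound : ∀ z ∈ discU, ∀ v, rhoS (f z) * ‖fderiv ℝ f z v‖ ≤ K * (rhoU z * ‖v‖))
    {z₁ z₂ : ℂ} (hz₁ : z₁ ∈ discU) (hz₂ : z₂ ∈ discU) :
    dS (f z₁) (f z₂) ≤ K * dU z₁ z₂ := by
  have hconv : Convex ℝ discU := discU_eq_ball ▸ convex_ball 0 1
  rw [dU, ← smul_eq_mul, ← Real.sInf_smul_of_nonneg hK]
  refine le_csInf (Set.Nonempty.smul_set ⟨_, fun t ↦ z₁ + t • (z₂ - z₁), by fun_prop, by simp,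
    by simp, fun t ht ↦ hconv.add_smul_sub_mem hz₁ hz₂ ht, rfl⟩) ?_
  rintro _ ⟨_, ⟨γ, hγ, hγ0, hγ1, hγU, rfl⟩, rfl⟩
  calc dS (f z₁) (f z₂) ≤ hypLenS (f ∘ γ) :=
        csInf_le ⟨0, by rintro _ ⟨φ, -, -, -, hφ, rfl⟩; exact hypLenS_nonneg hφ⟩
          ⟨f ∘ γ, hf.comp hγ hγU, by simp [hγ0], by simp [hγ1], fun t ht ↦ hmap (hγU t ht), rfl⟩
    _ ≤ K * hypLenU γ :=
        integral_mul_norm_deriv_comp_le continuousOn_rhoU continuousOn_rhoS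
          (discU_eq_ball ▸ isOpen_ball) hf hmap hbound hγ hγU

theorem schwarz_pick_hqr_general (K : ℝ) (f : ℂ → ℂ)
    (hharm : HarmonicOnC f discU) (hqr : QRegOn K f discU)
    (hmap : Set.MapsTo f discU stripS) :
    ∀ z₁ ∈ discU, ∀ z₂ ∈ discU, dS (f z₁) (f z₂) ≤ K * dU z₁ z₂ :=
  fun _ hz₁ _ hz₂ ↦ dS_le_mul_dU (zero_le_one.trans (hqr.one_le hz₁)) hqr.1 hmap
    (fun _ hz v ↦ rhoS_mul_norm_fderiv_le hharm hqr hmap hz v) hz₁ hz₂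

/-- Schwarz–Pick lemma for harmonic K-quasiregular maps into the strip. -/
theorem schwarz_pick_hqr (K : ℝ) (hK : 1 ≤ K) (f : ℂ → ℂ)
    (hharm : HarmonicOnC f discU) (hqr : QRegOn K f discU)
    (hmap : Set.MapsTo f discU stripS) :
    ∀ z₁ ∈ discU, ∀ z₂ ∈ discU, dS (f z₁) (f z₂) ≤ K * dU z₁ z₂ :=
  schwarz_pick_hqr_general K f hharm hqr hmap
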